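/- arXiv:1806.03927 — 2 statements merged into one kernel-verified Lean document; each statement's English description precedes it below -/
import Mathlib

section
/- Let A be an abelian group and let φ : A^r → B be a homomorphism of abelian groups given by (x₀, …, x_{r-1}) ↦ Σ α^i · p(x_i) where p : A → B is a homomorphism and α · (−) : B → B is a fixed endomorphism. If φ is an isomorphism, then the map A → B, a ↦ ν · p(a), induced by an element ν = Σ_{i=0}^{r} (-1)^i c_i α^{r-i} (with c_i acting as endomorphisms of B commuting with α and with the image of p, c₀ = 1), restricted suitably, identifies A with the kernel of the projection B → B/νB killing the top graded piece. Concretely: if B ≅ ⊕_{i=0}^{r-1} A via φ and multiplication by α shifts the grading sending the top piece into the span of lower ones via the relation ν = 0 on the quotient, then a ↦ ν·p(a) is injective with image a direct summand isomorphic to A. -/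
open Finset

/-! Moving each `c i` past the powers of `α` onto `p` and reindexing by `i ↦ r - i` writes
`ν (p a) = φ x` with `x j = (-1)^(r-j) • γ (r-j) a`. The top coordinate of this `x` is
`γ 0 a = a`, so the last coordinate of `φ⁻¹` is a retraction of `a ↦ ν (p a)`. -/

section

variable {R A B : Type*} [CommRing R] [AddCommGroup A] [AddCommGroup B] [Module R A] [Module R B]

theorem sum_smul_mul_pow_sub_apply_eq_sum_pow_apply {r : ℕ} (p : A →ₗ[R] B)
    (α : Module.End R B) (c : Fin (r + 1) → Module.End R B) (hcomm : ∀ i, Commute (c i) α)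
    (γ : Fin (r + 1) → Module.End R A) (hγ : ∀ (i) (a : A), c i (p a) = p (γ i a)) (a : A) :
    (∑ i : Fin (r + 1), ((-1 : R) ^ (i : ℕ)) • (c i * α ^ (r - (i : ℕ)))) (p a) =
      ∑ j : Fin (r + 1), (α ^ (j : ℕ)) (p (((-1 : R) ^ (j.rev : ℕ)) • γ j.rev a)) := by
  rw [LinearMap.sum_apply]
  conv_rhs => rw [← Equiv.sum_comp Fin.revPerm]
  refine Finset.sum_congr rfl fun i _ => ?_
  rw [Fin.revPerm_apply, Fin.rev_rev, Fin.val_rev, Nat.add_sub_add_right,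
    ((hcomm i).pow_right _).eq]
  simp only [LinearMap.smul_apply, Module.End.mul_apply, map_smul, hγ]

end

theorem nu_mul_injective_split_general {A B : Type*} [AddCommGroup A] [AddCommGroup B]
    (r : ℕ) (p : A →ₗ[ℤ] B) (α : Module.End ℤ B)
    (c : Fin (r + 1) → Module.End ℤ B)
    (hcomm : ∀ i, c i * α = α * c i)
    (γ : Fin (r + 1) → Module.End ℤ A) (hγ0 : γ 0 = 1)
    (hγ : ∀ (i) (a : A), c i (p a) = p (γ i a))
    (hφ : Function.Bijective fun x : Fin (r + 1) → A =>
        ∑ i : Fin (r + 1), (α ^ (i : ℕ)) (p (x i))) :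
    Function.Injective (fun a : A =>
        (∑ i : Fin (r + 1), ((-1 : ℤ) ^ (i : ℕ)) • (c i * α ^ (r - (i : ℕ)))) (p a)) ∧
    ∃ π : B →ₗ[ℤ] A, ∀ a : A,
        π ((∑ i : Fin (r + 1), ((-1 : ℤ) ^ (i : ℕ)) • (c i * α ^ (r - (i : ℕ)))) (p a))
          = a := by
  set ν : Module.End ℤ B := ∑ i : Fin (r + 1), ((-1 : ℤ) ^ (i : ℕ)) • (c i * α ^ (r - (i : ℕ)))
    with hν
  let Φ := LinearMap.lsum ℤ (fun _ => A) ℤ fun i : Fin (r + 1) => (α ^ (i : ℕ)) ∘ₗ p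
  have hΦ_apply (x : Fin (r + 1) → A) : Φ x = ∑ i : Fin (r + 1), (α ^ (i : ℕ)) (p (x i)) := by
    simp [Φ]
  let e := LinearEquiv.ofBijective Φ (by convert hφ using 1; exact funext hΦ_apply)
  have hret (a : A) : (LinearMap.proj (Fin.last r) ∘ₗ e.symm.toLinearMap) (ν (p a)) = a := by
    have he : e (fun j => (-1 : ℤ) ^ (j.rev : ℕ) • γ j.rev a) = ν (p a) := by
      rw [hν, sum_smul_mul_pow_sub_apply_eq_sum_pow_apply p α c hcomm γ hγ a]
      exact hΦ_apply _
    rw [← he, LinearMap.comp_apply, LinearEquiv.coe_coe, LinearEquiv.symm_apply_apply]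
    simp [hγ0]
  exact ⟨Function.LeftInverse.injective hret, _, hret⟩

/-- Abstract form of the projective bundle argument: if `B` is isomorphic to
`⊕_{i=0}^{r} A` via `(x_i) ↦ Σ α^i p(x_i)`, and `ν = Σ_{i=0}^{r} (-1)^i c_i α^{r-i}`
with `c_0 = 1` and the `c_i` commuting with `α` and with the image of `p`
(via endomorphisms `γ_i` of `A`, `γ_0 = 1`), then `a ↦ ν(p(a))` is injective and
its image is a direct summand of `B` isomorphic to `A` (it admits a retraction). -/
theorem nu_mul_injective_split {A B : Type*} [AddCommGroup A] [AddCommGroup B]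
    (r : ℕ) (hr : 1 ≤ r) (p : A →ₗ[ℤ] B) (α : Module.End ℤ B)
    (c : Fin (r + 1) → Module.End ℤ B) (hc0 : c 0 = 1)
    (hcomm : ∀ i, c i * α = α * c i)
    (γ : Fin (r + 1) → Module.End ℤ A) (hγ0 : γ 0 = 1)
    (hγ : ∀ (i) (a : A), c i (p a) = p (γ i a))
    (hφ : Function.Bijective fun x : Fin (r + 1) → A =>
        ∑ i : Fin (r + 1), (α ^ (i : ℕ)) (p (x i))) :
    Function.Injective (fun a : A =>
        (∑ i : Fin (r + 1), ((-1 : ℤ) ^ (i : ℕ)) • (c i * α ^ (r - (i : ℕ)))) (p a)) ∧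
    ∃ π : B →ₗ[ℤ] A, ∀ a : A,
        π ((∑ i : Fin (r + 1), ((-1 : ℤ) ^ (i : ℕ)) • (c i * α ^ (r - (i : ℕ)))) (p a))
          = a :=
  nu_mul_injective_split_general r p α c hcomm γ hγ0 hγ hφ
end

section
/- Let f : X → S be a morphism admitting a section i : S → X, and form the pullback square expressing i as the composition S → S ×_S X = X. Given families of maps ξ (for smooth morphisms) and ψ (for closed immersions/proper morphisms) satisfying: ξ is compatible with composition, ψ is compatible with composition, ξ_f · ψ_i = 1 whenever i is a section of a smooth f, and base-change compatibility ξ_f · ψ_k = ψ_i · ξ_g for Cartesian squares with i, k closed immersions and f, g smooth — then for any smooth p : Y → X and closed immersion i : Z → Y with q = p∘i a closed immersion, one has ξ_p · ψ_i = ψ_q. -/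
open CategoryTheory Limits

/-! Factor `i` through the graph `Z ⟶ Z ×_X Y` of `i`: this is a section of the base change
`Z ×_X Y ⟶ Z` of `p`, hence killed by `ξ` of that base change, while the second projection
`Z ×_X Y ⟶ Y` is the base change of `q`, along which `ψ` and `ξ` commute. -/

section

variable {C D : Type*} [Category C] [Category D] {ob : C → D} {Sm Cl : MorphismProperty C}
  (ξ : ∀ {X Y : C} (f : X ⟶ Y), Sm f → (ob X ⟶ ob Y))
  (ψ : ∀ {X Y : C} (i : X ⟶ Y), Cl i → (ob X ⟶ ob Y))

theorem psi_comp_xi_eq_of_isPullback_of_section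
    (hψcomp : ∀ {X Y Z : C} (i : X ⟶ Y) (i' : Y ⟶ Z) (hi : Cl i) (hi' : Cl i')
      (hii' : Cl (i ≫ i')), ψ (i ≫ i') hii' = ψ i hi ≫ ψ i' hi')
    (hsec : ∀ {S X : C} (f : X ⟶ S) (s : S ⟶ X) (hf : Sm f) (hs : Cl s),
      s ≫ f = 𝟙 S → ψ s hs ≫ ξ f hf = 𝟙 (ob S))
    (hbc : ∀ {Y T X S : C} (k : Y ⟶ X) (g : Y ⟶ T) (f : X ⟶ S) (i : T ⟶ S),
      IsPullback k g f i → ∀ (hk : Cl k) (hg : Sm g) (hf : Sm f) (hi : Cl i),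
      ψ k hk ≫ ξ f hf = ξ g hg ≫ ψ i hi)
    {Z W Y X : C} {fst : W ⟶ Z} {snd : W ⟶ Y} {q : Z ⟶ X} {p : Y ⟶ X}
    (sq : IsPullback fst snd q p) (hfst : Sm fst) (hsnd : Cl snd) (hq : Cl q) (hp : Sm p)
    {s : Z ⟶ W} (hs : Cl s) (hsfst : s ≫ fst = 𝟙 Z) {i : Z ⟶ Y} (hssnd : s ≫ snd = i)
    (hi : Cl i) : ψ i hi ≫ ξ p hp = ψ q hq := by
  subst hssnd
  rw [hψcomp s snd hs hsnd, Category.assoc, hbc snd fst p q sq.flip hsnd hfst hp hq,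
    ← Category.assoc, hsec fst s hfst hs hsfst, Category.id_comp]

end

theorem xi_closed_smooth_general {C D : Type*} [Category C] [Category D] [HasPullbacks C]
    (ob : C → D) (Sm Cl : MorphismProperty C)
    [Sm.IsStableUnderBaseChange] [Cl.IsStableUnderBaseChange]
    (ξ : ∀ {X Y : C} (f : X ⟶ Y), Sm f → (ob X ⟶ ob Y))
    (ψ : ∀ {X Y : C} (i : X ⟶ Y), Cl i → (ob X ⟶ ob Y))
    -- sections of smooth morphisms are closed immersions
    (hClsec : ∀ {S X : C} (f : X ⟶ S) (s : S ⟶ X), Sm f → s ≫ f = 𝟙 S → Cl s)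
    -- `ψ` is compatible with composition of closed immersions
    (hψcomp : ∀ {X Y Z : C} (i : X ⟶ Y) (i' : Y ⟶ Z) (hi : Cl i) (hi' : Cl i')
      (hii' : Cl (i ≫ i')), ψ (i ≫ i') hii' = ψ i hi ≫ ψ i' hi')
    -- `ξ_f · ψ_s = 1` whenever `s` is a section of a smooth morphism `f`
    (hsec : ∀ {S X : C} (f : X ⟶ S) (s : S ⟶ X) (hf : Sm f) (hs : Cl s),
      s ≫ f = 𝟙 S → ψ s hs ≫ ξ f hf = 𝟙 (ob S))
    -- base-change compatibility on Cartesian squares: `k ≫ f = g ≫ i`, `k, i` closed,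
    -- `f, g` smooth
    (hbc : ∀ {Y T X S : C} (k : Y ⟶ X) (g : Y ⟶ T) (f : X ⟶ S) (i : T ⟶ S),
      IsPullback k g f i → ∀ (hk : Cl k) (hg : Sm g) (hf : Sm f) (hi : Cl i),
      ψ k hk ≫ ξ f hf = ξ g hg ≫ ψ i hi) :
    ∀ {Z Y X : C} (i : Z ⟶ Y) (p : Y ⟶ X) (hi : Cl i) (hp : Sm p)
      (hq : Cl (i ≫ p)), ψ i hi ≫ ξ p hp = ψ (i ≫ p) hq := by
  intro Z Y X i p hi hp hq
  have sq := IsPullback.of_hasPullback (i ≫ p) p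
  have hfst : Sm (pullback.fst (i ≫ p) p) := Sm.of_isPullback sq.flip hp
  let graph : Z ⟶ pullback (i ≫ p) p := pullback.lift (𝟙 Z) i (Category.id_comp _)
  have hgraph : graph ≫ pullback.fst _ _ = 𝟙 Z := pullback.lift_fst _ _ _
  exact psi_comp_xi_eq_of_isPullback_of_section ξ ψ hψcomp hsec hbc sq hfst
    (Cl.of_isPullback sq hq) hq hp (hClsec _ graph hfst hgraph) hgraph
    (pullback.lift_snd _ _ _) hi

/-- Corollary 3.13 abstractly: given an object assignment `ob : C → D`, a family `ξ`
indexed by "smooth morphisms" (`Sm`) and a family `ψ` indexed by "closed immersions"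
(`Cl`), each compatible with composition, such that `ξ_f · ψ_i = 1` whenever `i` is a
section of a smooth `f`, and satisfying base-change compatibility on Cartesian squares
(closed immersions against smooth morphisms), then for any smooth `p : Y ⟶ X` and
closed immersion `i : Z ⟶ Y` whose composite `q = p ∘ i` is a closed immersion, one
has `ξ_p · ψ_i = ψ_q`. -/
theorem xi_closed_smooth {C D : Type*} [Category C] [Category D] [HasPullbacks C]
    (ob : C → D) (Sm Cl : MorphismProperty C)
    [Sm.IsStableUnderBaseChange] [Cl.IsStableUnderBaseChange]
    (ξ : ∀ {X Y : C} (f : X ⟶ Y), Sm f → (ob X ⟶ ob Y))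
    (ψ : ∀ {X Y : C} (i : X ⟶ Y), Cl i → (ob X ⟶ ob Y))
    -- sections of smooth morphisms are closed immersions
    (hClsec : ∀ {S X : C} (f : X ⟶ S) (s : S ⟶ X), Sm f → s ≫ f = 𝟙 S → Cl s)
    -- `ξ` is compatible with composition of smooth morphisms
    (hξcomp : ∀ {X Y Z : C} (f : X ⟶ Y) (g : Y ⟶ Z) (hf : Sm f) (hg : Sm g)
      (hfg : Sm (f ≫ g)), ξ (f ≫ g) hfg = ξ f hf ≫ ξ g hg)
    -- `ψ` is compatible with composition of closed immersions
    (hψcomp : ∀ {X Y Z : C} (i : X ⟶ Y) (i' : Y ⟶ Z) (hi : Cl i) (hi' : Cl i')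
      (hii' : Cl (i ≫ i')), ψ (i ≫ i') hii' = ψ i hi ≫ ψ i' hi')
    -- `ξ_f · ψ_s = 1` whenever `s` is a section of a smooth morphism `f`
    (hsec : ∀ {S X : C} (f : X ⟶ S) (s : S ⟶ X) (hf : Sm f) (hs : Cl s),
      s ≫ f = 𝟙 S → ψ s hs ≫ ξ f hf = 𝟙 (ob S))
    -- base-change compatibility on Cartesian squares: `k ≫ f = g ≫ i`, `k, i` closed,
    -- `f, g` smooth
    (hbc : ∀ {Y T X S : C} (k : Y ⟶ X) (g : Y ⟶ T) (f : X ⟶ S) (i : T ⟶ S),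
      IsPullback k g f i → ∀ (hk : Cl k) (hg : Sm g) (hf : Sm f) (hi : Cl i),
      ψ k hk ≫ ξ f hf = ξ g hg ≫ ψ i hi) :
    ∀ {Z Y X : C} (i : Z ⟶ Y) (p : Y ⟶ X) (hi : Cl i) (hp : Sm p)
      (hq : Cl (i ≫ p)), ψ i hi ≫ ξ p hp = ψ (i ≫ p) hq :=
  xi_closed_smooth_general ob Sm Cl ξ ψ hClsec hψcomp hsec hbc
end
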